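/- arXiv:0901.1954 — 2 statements merged into one kernel-verified Lean document; each statement's English description precedes it below -/
import Mathlib

section
/- For each k, the function f_k(ψ₁, ψ₂) = ψ_k² / (ψ_k² α_k + (p_R + ψ₁²ψ₂²/ψ_k²) α₁α₂/α_k + 1) defined on (0,∞)² is quasi-concave: for every t ∈ ℝ, the upper-level set {(ψ₁,ψ₂) ∈ ℝ₊² : f_k(ψ₁,ψ₂) ≥ t} is convex. -/
private lemma comb_pos {a b x y : ℝ} (ha : 0 ≤ a) (hb : 0 ≤ b) (hab : a + b = 1)
    (hx : 0 < x) (hy : 0 < y) : 0 < a * x + b * y := by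
  rcases eq_or_lt_of_le ha with h | h
  · have hb1 : b = 1 := by linarith
    simpa [← h, hb1] using hy
  · nlinarith [mul_nonneg hb hy.le, mul_pos h hx]

/-- SOC-style key inequality: midpoints stay in the cone. -/
private lemma key_ineq {c s d x1 y1 x2 y2 a b : ℝ} (hc : 0 < c) (hs : 0 < s) (hd : 0 < d)
    (hx1 : 0 < x1) (hx2 : 0 < x2) (hy1 : 0 < y1) (hy2 : 0 < y2)
    (h1 : s * y1 ^ 2 + d ≤ c * x1 ^ 2) (h2 : s * y2 ^ 2 + d ≤ c * x2 ^ 2)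
    (ha : 0 ≤ a) (hb : 0 ≤ b) (hab : a + b = 1) :
    s * (a * y1 + b * y2) ^ 2 + d ≤ c * (a * x1 + b * x2) ^ 2 := by
  have hA : 0 < c * (x1 * x2) := by positivity
  have hB : 0 < s * y1 * y2 + d := by positivity
  have hsq : (s * y1 * y2 + d) ^ 2 ≤ (c * (x1 * x2)) ^ 2 := by
    nlinarith [mul_le_mul h1 h2 (by positivity) (by positivity),
      mul_nonneg (mul_pos hs hd).le (sq_nonneg (y1 - y2))]
  have hx12 : s * y1 * y2 + d ≤ c * (x1 * x2) := by nlinarith [hsq, hA, hB]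
  have habsq : (a + b) ^ 2 = 1 := by rw [hab]; ring
  nlinarith [mul_le_mul_of_nonneg_left h1 (mul_nonneg ha ha),
    mul_le_mul_of_nonneg_left h2 (mul_nonneg hb hb),
    mul_le_mul_of_nonneg_left hx12 (mul_nonneg ha hb), habsq]

/-- The cleaned level-set inequality is preserved under convex combinations. -/
private lemma combo {A B C t x1 y1 x2 y2 a b : ℝ} (hA : 0 < A) (hB : 0 < B) (hC : 0 < C)
    (hx1 : 0 < x1) (hy1 : 0 < y1) (hx2 : 0 < x2) (hy2 : 0 < y2)
    (h1 : t * (x1 ^ 2 * A + (C + y1 ^ 2) * B + 1) ≤ x1 ^ 2)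
    (h2 : t * (x2 ^ 2 * A + (C + y2 ^ 2) * B + 1) ≤ x2 ^ 2)
    (ha : 0 ≤ a) (hb : 0 ≤ b) (hab : a + b = 1) :
    t * ((a * x1 + b * x2) ^ 2 * A + (C + (a * y1 + b * y2) ^ 2) * B + 1)
      ≤ (a * x1 + b * x2) ^ 2 := by
  rcases le_or_gt t 0 with ht | ht
  · have hD : 0 < (a * x1 + b * x2) ^ 2 * A + (C + (a * y1 + b * y2) ^ 2) * B + 1 := by
      positivity
    nlinarith [sq_nonneg (a * x1 + b * x2), mul_nonpos_of_nonpos_of_nonneg ht hD.le]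
  · have h1' : t * B * y1 ^ 2 + (t * C * B + t) ≤ (1 - t * A) * x1 ^ 2 := by nlinarith [h1]
    have h2' : t * B * y2 ^ 2 + (t * C * B + t) ≤ (1 - t * A) * x2 ^ 2 := by nlinarith [h2]
    have hc : 0 < 1 - t * A := by
      have hpos : 0 < (1 - t * A) * x1 ^ 2 :=
        lt_of_lt_of_le (by positivity) h1'
      by_contra h
      push_neg at h
      nlinarith [pow_pos hx1 2]
    have hkey := key_ineq hc (by positivity : (0:ℝ) < t * B)
      (by positivity : (0:ℝ) < t * C * B + t) hx1 hx2 hy1 hy2 h1' h2' ha hb hab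
    nlinarith [hkey]

/-- Rewriting the messy fraction inequality into the cleaned polynomial form. -/
private lemma ineq_iff {A B C t x y : ℝ} (hA : 0 < A) (hB : 0 < B) (hC : 0 < C)
    (hx : 0 < x) (hy : 0 < y) :
    t ≤ x ^ 2 / (x ^ 2 * A + (C + x ^ 2 * y ^ 2 / x ^ 2) * A * B / A + 1) ↔
      t * (x ^ 2 * A + (C + y ^ 2) * B + 1) ≤ x ^ 2 := by
  have hDm : x ^ 2 * A + (C + x ^ 2 * y ^ 2 / x ^ 2) * A * B / A + 1
      = x ^ 2 * A + (C + y ^ 2) * B + 1 := by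
    field_simp
  rw [hDm, le_div_iff₀ (by positivity)]

/-- Same, with the roles of the coordinates swapped (second SNR function). -/
private lemma ineq_iff' {A B C t x y : ℝ} (hA : 0 < A) (hB : 0 < B) (hC : 0 < C)
    (hx : 0 < x) (hy : 0 < y) :
    t ≤ y ^ 2 / (y ^ 2 * A + (C + x ^ 2 * y ^ 2 / y ^ 2) * B * A / A + 1) ↔
      t * (y ^ 2 * A + (C + x ^ 2) * B + 1) ≤ y ^ 2 := by
  have hDm : y ^ 2 * A + (C + x ^ 2 * y ^ 2 / y ^ 2) * B * A / A + 1
      = y ^ 2 * A + (C + x ^ 2) * B + 1 := by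
    field_simp
  rw [hDm, le_div_iff₀ (by positivity)]

/-- Each instantaneous-SNR function
`f_k(ψ₁,ψ₂) = ψ_k²/(ψ_k²α_k + (p_R + ψ₁²ψ₂²/ψ_k²)α₁α₂/α_k + 1)` is quasi-concave on
`(0,∞)²`: all its upper-level sets are convex. -/
theorem snr_quasiconcave (a1 a2 pR : ℝ) (ha1 : 0 < a1) (ha2 : 0 < a2) (hpR : 0 < pR)
    (t : ℝ) :
    Convex ℝ {p : ℝ × ℝ | 0 < p.1 ∧ 0 < p.2 ∧
      t ≤ p.1 ^ 2 / (p.1 ^ 2 * a1 + (pR + p.1 ^ 2 * p.2 ^ 2 / p.1 ^ 2) * a1 * a2 / a1 + 1)} ∧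
    Convex ℝ {p : ℝ × ℝ | 0 < p.1 ∧ 0 < p.2 ∧
      t ≤ p.2 ^ 2 / (p.2 ^ 2 * a2 + (pR + p.1 ^ 2 * p.2 ^ 2 / p.2 ^ 2) * a1 * a2 / a2 + 1)} := by
  constructor
  · rintro ⟨x1, y1⟩ ⟨hx1, hy1, h1⟩ ⟨x2, y2⟩ ⟨hx2, hy2, h2⟩ a b ha hb hab
    simp only [Set.mem_setOf_eq] at *
    have hX : 0 < a * x1 + b * x2 := comb_pos ha hb hab hx1 hx2
    have hY : 0 < a * y1 + b * y2 := comb_pos ha hb hab hy1 hy2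
    refine ⟨by simpa using hX, by simpa using hY, ?_⟩
    have h1' := (ineq_iff ha1 ha2 hpR hx1 hy1).mp h1
    have h2' := (ineq_iff ha1 ha2 hpR hx2 hy2).mp h2
    have := combo ha1 ha2 hpR hx1 hy1 hx2 hy2 h1' h2' ha hb hab
    simpa using (ineq_iff ha1 ha2 hpR hX hY).mpr this
  · rintro ⟨x1, y1⟩ ⟨hx1, hy1, h1⟩ ⟨x2, y2⟩ ⟨hx2, hy2, h2⟩ a b ha hb hab
    simp only [Set.mem_setOf_eq] at *
    have hX : 0 < a * x1 + b * x2 := comb_pos ha hb hab hx1 hx2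
    have hY : 0 < a * y1 + b * y2 := comb_pos ha hb hab hy1 hy2
    refine ⟨by simpa using hX, by simpa using hY, ?_⟩
    have h1' := (ineq_iff' ha2 ha1 hpR hx1 hy1).mp h1
    have h2' := (ineq_iff' ha2 ha1 hpR hx2 hy2).mp h2
    have := combo ha2 ha1 hpR hy1 hx1 hy2 hx2 h1' h2' ha hb hab
    simpa using (ineq_iff' ha2 ha1 hpR hX hY).mpr this
end

section
/- For fixed positive constants α₁, α₂, p_R and t ≥ 0, ρ ∈ (0,1], R_k ≥ 0, define v_k = ((1+ρ)/(p_R α₁ α₂))·(exp((t + 2ρR_k)/ρ) - 1) > 0. Then for ψ = (ψ₁, ψ₂) ∈ ℝ₊², the condition -ln[1 + (1/(1+ρ))·ψ_k²p_Rα₁α₂/(ψ_k²α_k + (p_R + ψ₁²ψ₂²/ψ_k²)α₁α₂/α_k + 1)]^{-ρ} - 2ρR_k ≥ t is equivalent to ψ_k/√(v_k) ≥ √(1 + p_Rα₁α₂/α_k + α₁ψ₁² + α₂ψ₂²). -/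
lemma aux_soc (C ρ Rk t ψk S : ℝ) (hC : 0 < C) (hρ0 : 0 < ρ)
    (htpos : 0 < t + 2 * ρ * Rk) (hψk : 0 < ψk) (hS : 0 < S) :
    (t ≤ -Real.log ((1 + 1 / (1 + ρ) * (ψk ^ 2 * C / S)) ^ (-ρ)) - 2 * ρ * Rk) ↔
    Real.sqrt S ≤ ψk / Real.sqrt ((1 + ρ) / C * (Real.exp ((t + 2 * ρ * Rk) / ρ) - 1)) := by
  have hρ1 : (0:ℝ) < 1 + ρ := by linarith
  set E := Real.exp ((t + 2 * ρ * Rk) / ρ) with hE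
  have hE1 : 1 < E := by
    rw [hE]
    calc (1:ℝ) = Real.exp 0 := Real.exp_zero.symm
      _ < _ := Real.exp_lt_exp.mpr (by positivity)
  set v : ℝ := (1 + ρ) / C * (E - 1) with hv
  have hv0 : 0 < v := by
    apply mul_pos (by positivity); linarith
  set b : ℝ := 1 + 1 / (1 + ρ) * (ψk ^ 2 * C / S) with hb
  have hb1 : 1 < b := by
    have : 0 < 1 / (1 + ρ) * (ψk ^ 2 * C / S) := by positivity
    rw [hb]; linarith
  have hb0 : 0 < b := by linarith
  have hlog : Real.log (b ^ (-ρ)) = -ρ * Real.log b := Real.log_rpow hb0 _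
  rw [hlog]
  have key : (t ≤ -(-ρ * Real.log b) - 2 * ρ * Rk) ↔ v * S ≤ ψk ^ 2 := by
    rw [neg_mul, neg_neg]
    constructor
    · intro h
      have h2 : (t + 2 * ρ * Rk) / ρ ≤ Real.log b := by
        rw [div_le_iff₀ hρ0]; linarith [mul_comm ρ (Real.log b)]
      have h3 : E ≤ b := by
        rw [hE]; calc Real.exp ((t + 2 * ρ * Rk) / ρ) ≤ Real.exp (Real.log b) :=
              Real.exp_le_exp.mpr h2
          _ = b := Real.exp_log hb0
      have h4 : E - 1 ≤ 1 / (1 + ρ) * (ψk ^ 2 * C / S) := by rw [hb] at h3; linarith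
      rw [hv]
      calc (1 + ρ) / C * (E - 1) * S ≤ (1 + ρ) / C * (1 / (1 + ρ) * (ψk ^ 2 * C / S)) * S := by
            apply mul_le_mul_of_nonneg_right _ hS.le
            exact mul_le_mul_of_nonneg_left h4 (by positivity)
        _ = ψk ^ 2 := by field_simp
    · intro h
      rw [hv] at h
      have hcs : (0:ℝ) < C / ((1 + ρ) * S) := by positivity
      have hmul := mul_le_mul_of_nonneg_right h hcs.le
      have e1 : (1 + ρ) / C * (E - 1) * S * (C / ((1 + ρ) * S)) = E - 1 := by
        field_simp
      have e2 : ψk ^ 2 * (C / ((1 + ρ) * S)) = 1 / (1 + ρ) * (ψk ^ 2 * C / S) := by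
        field_simp
      rw [e1, e2] at hmul
      have h3 : E ≤ b := by rw [hb]; linarith
      have h2 : (t + 2 * ρ * Rk) / ρ ≤ Real.log b := by
        rw [← Real.log_exp ((t + 2 * ρ * Rk) / ρ)]
        exact Real.log_le_log (Real.exp_pos _) h3
      rw [div_le_iff₀ hρ0] at h2
      linarith [mul_comm (Real.log b) ρ]
  rw [key]
  have hsv : 0 < Real.sqrt v := Real.sqrt_pos.mpr hv0
  constructor
  · intro h
    rw [le_div_iff₀ hsv, ← Real.sqrt_mul hS.le]
    calc Real.sqrt (S * v) ≤ Real.sqrt (ψk ^ 2) := Real.sqrt_le_sqrt (by nlinarith)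
      _ = ψk := Real.sqrt_sq hψk.le
  · intro h
    rw [le_div_iff₀ hsv, ← Real.sqrt_mul hS.le] at h
    nlinarith [Real.mul_self_sqrt (show (0:ℝ) ≤ S * v by positivity),
      mul_self_le_mul_self (Real.sqrt_nonneg (S * v)) h]

/-- The instantaneous-exponent constraint
`E^int_{r,k}(ψ,ρ,R_k) ≥ t` is equivalent to the second-order cone constraint
`ψ_k/√(v_k) ≥ √(1 + p_Rα₁α₂/α_k + α₁ψ₁² + α₂ψ₂²)`, where
`v_k = ((1+ρ)/(p_Rα₁α₂))(exp((t + 2ρR_k)/ρ) - 1)`. -/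
theorem exponent_constraint_iff_soc
    (a1 a2 pR ρ Rk t ψ1 ψ2 ψk ak : ℝ)
    (ha1 : 0 < a1) (ha2 : 0 < a2) (hpR : 0 < pR)
    (hρ : ρ ∈ Set.Ioc (0 : ℝ) 1) (hRk : 0 ≤ Rk) (ht : 0 ≤ t)
    (htpos : 0 < t + 2 * ρ * Rk)
    (hψ1 : 0 < ψ1) (hψ2 : 0 < ψ2)
    (hk : (ψk = ψ1 ∧ ak = a1) ∨ (ψk = ψ2 ∧ ak = a2)) :
    (t ≤ -Real.log ((1 + 1 / (1 + ρ) * (ψk ^ 2 * pR * a1 * a2 /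
          (ψk ^ 2 * ak + (pR + ψ1 ^ 2 * ψ2 ^ 2 / ψk ^ 2) * a1 * a2 / ak + 1))) ^ (-ρ))
        - 2 * ρ * Rk) ↔
    Real.sqrt (1 + pR * a1 * a2 / ak + a1 * ψ1 ^ 2 + a2 * ψ2 ^ 2) ≤
      ψk / Real.sqrt ((1 + ρ) / (pR * a1 * a2) * (Real.exp ((t + 2 * ρ * Rk) / ρ) - 1)) := by
  obtain ⟨hρ0, hρ1⟩ := hρ
  have hC : 0 < pR * a1 * a2 := by positivity
  rcases hk with ⟨h1, h2⟩ | ⟨h1, h2⟩ <;> rw [h1, h2]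
  · have hS : 0 < 1 + pR * a1 * a2 / a1 + a1 * ψ1 ^ 2 + a2 * ψ2 ^ 2 := by positivity
    have hD : ψ1 ^ 2 * a1 + (pR + ψ1 ^ 2 * ψ2 ^ 2 / ψ1 ^ 2) * a1 * a2 / a1 + 1
        = 1 + pR * a1 * a2 / a1 + a1 * ψ1 ^ 2 + a2 * ψ2 ^ 2 := by
      field_simp; ring
    have hM : ψ1 ^ 2 * pR * a1 * a2 = ψ1 ^ 2 * (pR * a1 * a2) := by ring
    rw [hD, hM]
    exact aux_soc (pR * a1 * a2) ρ Rk t ψ1 _ hC hρ0 htpos hψ1 hS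
  · have hS : 0 < 1 + pR * a1 * a2 / a2 + a1 * ψ1 ^ 2 + a2 * ψ2 ^ 2 := by positivity
    have hD : ψ2 ^ 2 * a2 + (pR + ψ1 ^ 2 * ψ2 ^ 2 / ψ2 ^ 2) * a1 * a2 / a2 + 1
        = 1 + pR * a1 * a2 / a2 + a1 * ψ1 ^ 2 + a2 * ψ2 ^ 2 := by
      field_simp; ring
    have hM : ψ2 ^ 2 * pR * a1 * a2 = ψ2 ^ 2 * (pR * a1 * a2) := by ring
    rw [hD, hM]
    exact aux_soc (pR * a1 * a2) ρ Rk t ψ2 _ hC hρ0 htpos hψ2 hS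
end
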